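/- arXiv:2109.08858 — 3 statements merged into one kernel-verified Lean document; each statement's English description precedes it below -/
import Mathlib

section
/- Suppose f = (1/n)∑_{i=1}^n f_i where each f_i : ℝ^d → ℝ is convex and L-smooth. Then for any x, y, the average of squared gradient differences satisfies (1/n)∑_{i=1}^n ‖∇f_i(x) - ∇f_i(y)‖² ≤ 2L(f(x) - f(y) - ⟨∇f(y), x - y⟩). -/
open RealInnerProductSpace

lemma aux_interp {d : ℕ} (L : ℝ)
    (f : EuclideanSpace ℝ (Fin d) → ℝ)
    (g : EuclideanSpace ℝ (Fin d) → EuclideanSpace ℝ (Fin d))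
    (hconv : ∀ x y, f y ≥ f x + ⟪g x, y - x⟫)
    (hsmooth : ∀ x y, |f y - f x - ⟪g x, y - x⟫| ≤ L / 2 * ‖y - x‖ ^ 2)
    (x y : EuclideanSpace ℝ (Fin d)) :
    ‖g x - g y‖ ^ 2 ≤ 2 * L * (f x - f y - ⟪g y, x - y⟫) := by
  rcases le_or_gt L 0 with hL | hL
  · -- degenerate case: f is affine, all gradients equal
    have heq : ∀ u w : EuclideanSpace ℝ (Fin d), f w - f u = ⟪g u, w - u⟫ := by
      intro u w
      have h1 := hsmooth u w
      have h2 : L / 2 * ‖w - u‖ ^ 2 ≤ 0 := by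
        apply mul_nonpos_of_nonpos_of_nonneg (by linarith) (by positivity)
      have := abs_nonneg (f w - f u - ⟪g u, w - u⟫)
      have : |f w - f u - ⟪g u, w - u⟫| = 0 := le_antisymm (h1.trans h2) this
      have := abs_eq_zero.mp this
      linarith
    have hzero : ∀ z : EuclideanSpace ℝ (Fin d), ⟪g x - g y, z - y⟫ = 0 := by
      intro z
      have h1 := heq x z
      have h2 := heq x y
      have h3 := heq y z
      rw [inner_sub_left]
      have e1 : ⟪g x, z - x⟫ - ⟪g x, y - x⟫ = ⟪g x, z - y⟫ := by
        rw [← inner_sub_right]; congr 1; abel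
      linarith [e1]
    have hv : ‖g x - g y‖ ^ 2 = 0 := by
      have h := hzero (y + (g x - g y))
      rwa [add_sub_cancel_left, real_inner_self_eq_norm_sq] at h
    have hrhs : f x - f y - ⟪g y, x - y⟫ = 0 := by
      have := heq y x; linarith
    rw [hv, hrhs]; simp
  · -- main case L > 0
    set v : EuclideanSpace ℝ (Fin d) := g x - g y with hv
    set z : EuclideanSpace ℝ (Fin d) := x - L⁻¹ • v with hz
    have hzx : z - x = -(L⁻¹ • v) := by rw [hz]; abel
    have hsm := hsmooth x z
    have hcv := hconv y z
    have e1 : ⟪g x, z - x⟫ = -(L⁻¹ * ⟪g x, v⟫) := by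
      rw [hzx, inner_neg_right, real_inner_smul_right]
    have e2 : ‖z - x‖ ^ 2 = L⁻¹ ^ 2 * ‖v‖ ^ 2 := by
      rw [hzx, norm_neg, norm_smul]
      simp [mul_pow, abs_of_pos (inv_pos.mpr hL)]
    have e3 : ⟪g y, z - y⟫ = ⟪g y, x - y⟫ - L⁻¹ * ⟪g y, v⟫ := by
      have : z - y = (x - y) - L⁻¹ • v := by rw [hz]; abel
      rw [this, inner_sub_right, real_inner_smul_right]
    have e4 : ⟪g x, v⟫ - ⟪g y, v⟫ = ‖v‖ ^ 2 := by
      rw [← inner_sub_left, ← hv, real_inner_self_eq_norm_sq]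
    have hub : f z - f x - ⟪g x, z - x⟫ ≤ L / 2 * ‖z - x‖ ^ 2 :=
      (abs_le.mp hsm).2
    rw [e1, e2] at hub
    rw [e3] at hcv
    have hLinv : L * L⁻¹ = 1 := mul_inv_cancel₀ (ne_of_gt hL)
    have e5 : L / 2 * (L⁻¹ ^ 2 * ‖v‖ ^ 2) = 1 / 2 * L⁻¹ * ‖v‖ ^ 2 := by
      field_simp
    have h5 : 1 / 2 * L⁻¹ * ‖v‖ ^ 2 ≤ f x - f y - ⟪g y, x - y⟫ := by
      have e6 : L⁻¹ * ⟪g x, v⟫ - L⁻¹ * ⟪g y, v⟫ = L⁻¹ * ‖v‖ ^ 2 := by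
        rw [← mul_sub, e4]
      rw [e5] at hub; nlinarith [e6]
    calc ‖v‖ ^ 2 = 2 * L * (1 / 2 * L⁻¹ * ‖v‖ ^ 2) := by
          field_simp
      _ ≤ 2 * L * (f x - f y - ⟪g y, x - y⟫) :=
          mul_le_mul_of_nonneg_left h5 (by linarith)

/-- If `f = (1/n) ∑ fᵢ` with each `fᵢ` convex and `L`-smooth, then the average squared
gradient difference is bounded by `2L(f x - f y - ⟪∇f y, x - y⟫)`. -/
theorem stmt1 {d n : ℕ} (hn : 0 < n) (L : ℝ)
    (f : Fin n → EuclideanSpace ℝ (Fin d) → ℝ)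
    (g : Fin n → EuclideanSpace ℝ (Fin d) → EuclideanSpace ℝ (Fin d))
    (hconv : ∀ i x y, f i y ≥ f i x + ⟪g i x, y - x⟫)
    (hsmooth : ∀ i x y, |f i y - f i x - ⟪g i x, y - x⟫| ≤ L / 2 * ‖y - x‖ ^ 2)
    (x y : EuclideanSpace ℝ (Fin d)) :
    (1 / (n : ℝ)) * ∑ i, ‖g i x - g i y‖ ^ 2 ≤
      2 * L * ((1 / (n : ℝ)) * ∑ i, f i x - (1 / (n : ℝ)) * ∑ i, f i y -
        ⟪(1 / (n : ℝ)) • ∑ i, g i y, x - y⟫) := by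
  have hn' : (0 : ℝ) < n := Nat.cast_pos.mpr hn
  have hkey : ∀ i, ‖g i x - g i y‖ ^ 2 ≤ 2 * L * (f i x - f i y - ⟪g i y, x - y⟫) :=
    fun i => aux_interp L (f i) (g i) (hconv i) (hsmooth i) x y
  have hsum : ∑ i, ‖g i x - g i y‖ ^ 2 ≤
      ∑ i, 2 * L * (f i x - f i y - ⟪g i y, x - y⟫) :=
    Finset.sum_le_sum (fun i _ => hkey i)
  have hinner : ⟪(1 / (n : ℝ)) • ∑ i, g i y, x - y⟫
      = (1 / (n : ℝ)) * ∑ i, ⟪g i y, x - y⟫ := by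
    rw [real_inner_smul_left, sum_inner]
  rw [hinner]
  have hs2 : ∑ i, 2 * L * (f i x - f i y - ⟪g i y, x - y⟫) =
      2 * L * (∑ i, f i x - ∑ i, f i y - ∑ i, (⟪g i y, x - y⟫ : ℝ)) := by
    rw [← Finset.mul_sum, Finset.sum_sub_distrib, Finset.sum_sub_distrib]
  have h1 : (0 : ℝ) ≤ 1 / (n : ℝ) := by positivity
  calc (1 / (n : ℝ)) * ∑ i, ‖g i x - g i y‖ ^ 2
      ≤ (1 / (n : ℝ)) * (2 * L * (∑ i, f i x - ∑ i, f i y - ∑ i, (⟪g i y, x - y⟫ : ℝ))) :=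
        mul_le_mul_of_nonneg_left (hsum.trans_eq hs2) h1
    _ = 2 * L * ((1 / (n : ℝ)) * ∑ i, f i x - (1 / (n : ℝ)) * ∑ i, f i y -
        (1 / (n : ℝ)) * ∑ i, ⟪g i y, x - y⟫) := by ring
end

section
/- For the coordinate-wise gradient estimator of an L-smooth function f : ℝ^d → ℝ with smoothing parameter μ > 0, defined by ∇̂f(x) = ∑_{i=1}^d ((f(x + μ e_i) - f(x - μ e_i))/(2μ)) e_i, we have ‖∇̂f(x) - ∇f(x)‖² ≤ μ² L² d for all x. -/
open RealInnerProductSpace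

/-- The coordinate-wise gradient estimator of an `L`-smooth function satisfies
`‖∇̂f(x) - ∇f(x)‖² ≤ μ² L² d`. -/
theorem stmt3 {d : ℕ} (L μ : ℝ) (hμ : 0 < μ)
    (f : EuclideanSpace ℝ (Fin d) → ℝ) (g : EuclideanSpace ℝ (Fin d) → EuclideanSpace ℝ (Fin d))
    (hsmooth : ∀ x y, |f y - f x - ⟪g x, y - x⟫| ≤ L / 2 * ‖y - x‖ ^ 2)
    (x : EuclideanSpace ℝ (Fin d)) :
    ‖(∑ i : Fin d,
        ((f (x + μ • EuclideanSpace.single i (1 : ℝ)) -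
          f (x - μ • EuclideanSpace.single i (1 : ℝ))) / (2 * μ)) •
          EuclideanSpace.single i (1 : ℝ)) - g x‖ ^ 2 ≤ μ ^ 2 * L ^ 2 * d := by
  set est := fun i : Fin d =>
    (f (x + μ • EuclideanSpace.single i (1 : ℝ)) -
      f (x - μ • EuclideanSpace.single i (1 : ℝ))) / (2 * μ) with hest
  have key : ∀ i, |est i - g x i| ≤ L * μ / 2 := by
    intro i
    have h1 := hsmooth x (x + μ • EuclideanSpace.single i (1 : ℝ))
    have h2 := hsmooth x (x - μ • EuclideanSpace.single i (1 : ℝ))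
    have e1 : (x + μ • EuclideanSpace.single i (1 : ℝ)) - x
        = μ • EuclideanSpace.single i (1 : ℝ) := by abel
    have e2 : (x - μ • EuclideanSpace.single i (1 : ℝ)) - x
        = -(μ • EuclideanSpace.single i (1 : ℝ)) := by abel
    rw [e1] at h1
    rw [e2] at h2
    have hi : ⟪g x, μ • EuclideanSpace.single i (1 : ℝ)⟫ = μ * g x i := by
      rw [real_inner_smul_right, EuclideanSpace.inner_single_right]
      simp
    have hn : ‖μ • EuclideanSpace.single i (1 : ℝ)‖ = μ := by
      rw [norm_smul]
      simp [abs_of_pos hμ]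
    rw [hi, hn] at h1
    rw [inner_neg_right, hi, norm_neg, hn] at h2
    -- combine
    have h3 : |(f (x + μ • EuclideanSpace.single i (1 : ℝ)) -
        f (x - μ • EuclideanSpace.single i (1 : ℝ))) - 2 * μ * g x i| ≤ L * μ ^ 2 := by
      have := abs_sub (f (x + μ • EuclideanSpace.single i (1 : ℝ)) - f x - μ * g x i)
        (f (x - μ • EuclideanSpace.single i (1 : ℝ)) - f x - -(μ * g x i))
      calc |(f (x + μ • EuclideanSpace.single i (1 : ℝ)) -
            f (x - μ • EuclideanSpace.single i (1 : ℝ))) - 2 * μ * g x i|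
          = |(f (x + μ • EuclideanSpace.single i (1 : ℝ)) - f x - μ * g x i) -
              (f (x - μ • EuclideanSpace.single i (1 : ℝ)) - f x - -(μ * g x i))| := by
            ring_nf
        _ ≤ |f (x + μ • EuclideanSpace.single i (1 : ℝ)) - f x - μ * g x i| +
              |f (x - μ • EuclideanSpace.single i (1 : ℝ)) - f x - -(μ * g x i)| :=
            abs_sub _ _
        _ ≤ L / 2 * μ ^ 2 + L / 2 * μ ^ 2 := add_le_add h1 h2
        _ = L * μ ^ 2 := by ring
    have : est i - g x i = ((f (x + μ • EuclideanSpace.single i (1 : ℝ)) -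
        f (x - μ • EuclideanSpace.single i (1 : ℝ))) - 2 * μ * g x i) / (2 * μ) := by
      rw [hest]; field_simp
    rw [this, abs_div, abs_of_pos (by linarith : (0:ℝ) < 2 * μ)]
    rw [div_le_iff₀ (by linarith : (0:ℝ) < 2 * μ)]
    calc |_| ≤ L * μ ^ 2 := h3
      _ = L * μ / 2 * (2 * μ) := by ring
  have hcomp : ∀ j, ((∑ i : Fin d, est i • EuclideanSpace.single i (1 : ℝ)) - g x) j
      = est j - g x j := by
    intro j
    have : (∑ i : Fin d, est i • EuclideanSpace.single i (1 : ℝ)) j = est j := by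
      rw [WithLp.ofLp_sum, Finset.sum_apply]
      simp [EuclideanSpace.single_apply]
    simp [PiLp.sub_apply, this]
  calc ‖(∑ i : Fin d, est i • EuclideanSpace.single i (1 : ℝ)) - g x‖ ^ 2
      = ∑ j : Fin d, (est j - g x j) ^ 2 := by
        rw [EuclideanSpace.norm_eq, Real.sq_sqrt (by positivity)]
        refine Finset.sum_congr rfl fun j _ => ?_
        rw [hcomp j, Real.norm_eq_abs, sq_abs]
    _ ≤ ∑ j : Fin d, μ ^ 2 * L ^ 2 := by
        refine Finset.sum_le_sum fun j _ => ?_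
        have h := key j
        have h2 : (est j - g x j) ^ 2 ≤ (L * μ / 2) ^ 2 := by
          rw [← sq_abs]
          exact pow_le_pow_left₀ (abs_nonneg _) h 2
        nlinarith [sq_nonneg (L * μ)]
    _ = μ ^ 2 * L ^ 2 * d := by
        rw [Finset.sum_const, Finset.card_univ, Fintype.card_fin, nsmul_eq_mul]; ring
end

section
/- Suppose each f_i is L-smooth and f = (1/n)∑ f_i. Let δ = ∇f_{i}(x̲) - ∇f_{i}(x̃) + ∇f(x̃) - ∇f(x̲) where i is uniformly random in {1,…,n}. Then E[δ] = 0 and E[‖δ‖²] ≤ (1/n)∑_{i=1}^n ‖∇f_i(x̲) - ∇f_i(x̃)‖², and if moreover each f_i is convex then E[‖δ‖²] ≤ 2L(f(x̃) - f(x̲) - ⟨∇f(x̲), x̃ - x̲⟩). -/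
open RealInnerProductSpace

lemma svrg_key {d : ℕ} (L : ℝ) (fi : EuclideanSpace ℝ (Fin d) → ℝ)
    (gi : EuclideanSpace ℝ (Fin d) → EuclideanSpace ℝ (Fin d))
    (hs : ∀ x y, |fi y - fi x - ⟪gi x, y - x⟫| ≤ L / 2 * ‖y - x‖ ^ 2)
    (hc : ∀ x y, fi y ≥ fi x + ⟪gi x, y - x⟫) (a b : EuclideanSpace ℝ (Fin d)) :
    ‖gi a - gi b‖ ^ 2 ≤ 2 * L * (fi b - fi a - ⟪gi a, b - a⟫) := by
  rcases le_or_gt L 0 with hL | hL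
  · -- all smoothness inequalities are equalities
    have hexact : ∀ x y, fi y - fi x - ⟪gi x, y - x⟫ = 0 := by
      intro x y
      have h1 := hs x y
      have h2 : L / 2 * ‖y - x‖ ^ 2 ≤ 0 := by
        have : (0:ℝ) ≤ ‖y - x‖ ^ 2 := by positivity
        nlinarith
      have := (abs_nonneg _).trans (h1.trans h2)
      have habs : |fi y - fi x - ⟪gi x, y - x⟫| = 0 := le_antisymm (h1.trans h2) (abs_nonneg _)
      exact abs_eq_zero.mp habs
    set u := gi a - gi b with hu
    have hgap := hexact a b
    have hu0 : u = 0 := by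
      set z := b + u with hz
      have e1 := hexact a z
      have e2 := hexact b z
      have h1 : z - b = u := by simp [hz]
      have h2 : z - a = (b - a) + u := by rw [hz]; abel
      rw [h1] at e2
      rw [h2, inner_add_right] at e1
      have huu : ⟪u, u⟫ = 0 := by
        have : ⟪gi b, u⟫ = ⟪gi a, u⟫ := by linarith
        rw [hu, inner_sub_left]
        linarith
      exact inner_self_eq_zero.mp huu
    rw [hu0, hgap]
    simp
  · -- L > 0
    set u := gi b - gi a with hu
    set z := b - L⁻¹ • u with hz
    have h1 := hc a z
    have h2 := (abs_le.mp (hs b z)).2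
    have hzb : z - b = -(L⁻¹ • u) := by rw [hz]; abel
    have hza : z - a = (b - a) - L⁻¹ • u := by rw [hz]; abel
    have hq : ⟪gi b, u⟫ - ⟪gi a, u⟫ = ‖u‖ ^ 2 := by
      rw [← inner_sub_left, ← hu, real_inner_self_eq_norm_sq]
    have hz2 : ⟪gi b, z - b⟫ = -(L⁻¹ * ⟪gi b, u⟫) := by
      rw [hzb, inner_neg_right, real_inner_smul_right]
    have hz1 : ⟪gi a, z - a⟫ = ⟪gi a, b - a⟫ - L⁻¹ * ⟪gi a, u⟫ := by
      rw [hza, inner_sub_right, real_inner_smul_right]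
    have hz3 : ‖z - b‖ ^ 2 = L⁻¹ ^ 2 * ‖u‖ ^ 2 := by
      rw [hzb, norm_neg, norm_smul, mul_pow, Real.norm_eq_abs, sq_abs]
    rw [hz2, hz3] at h2
    rw [hz1] at h1
    have hnn : ‖gi a - gi b‖ = ‖u‖ := by rw [hu, norm_sub_rev]
    rw [hnn]
    have h2' : L / 2 * (L⁻¹ ^ 2 * ‖u‖ ^ 2) = L⁻¹ * ‖u‖ ^ 2 / 2 := by
      field_simp
    rw [h2'] at h2
    have hq' : L⁻¹ * ⟪gi b, u⟫ - L⁻¹ * ⟪gi a, u⟫ = L⁻¹ * ‖u‖ ^ 2 := by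
      rw [← mul_sub, hq]
    have step : L⁻¹ * ‖u‖ ^ 2 / 2 ≤ fi b - fi a - ⟪gi a, b - a⟫ := by linarith
    have hmul := mul_le_mul_of_nonneg_left step (by positivity : (0:ℝ) ≤ 2 * L)
    have hid : (2 * L) * (L⁻¹ * ‖u‖ ^ 2 / 2) = ‖u‖ ^ 2 := by
      field_simp
    linarith

/-- For the SVRG gradient error `δᵢ = ∇fᵢ(x̲) - ∇fᵢ(x̃) + ∇f(x̃) - ∇f(x̲)` with a
uniformly random index: `E[δ] = 0`, `E[‖δ‖²] ≤ (1/n)∑‖∇fᵢ(x̲) - ∇fᵢ(x̃)‖²`, and if each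
`fᵢ` is convex then `E[‖δ‖²] ≤ 2L(f(x̃) - f(x̲) - ⟪∇f(x̲), x̃ - x̲⟫)`. -/
theorem stmt16 {d n : ℕ} (hn : 0 < n) (L : ℝ)
    (f : Fin n → EuclideanSpace ℝ (Fin d) → ℝ)
    (g : Fin n → EuclideanSpace ℝ (Fin d) → EuclideanSpace ℝ (Fin d))
    (hsmooth : ∀ i x y, |f i y - f i x - ⟪g i x, y - x⟫| ≤ L / 2 * ‖y - x‖ ^ 2)
    (xlow xtil : EuclideanSpace ℝ (Fin d)) :
    ((1 / (n : ℝ)) • ∑ i,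
        (g i xlow - g i xtil + (1 / (n : ℝ)) • ∑ j, g j xtil - (1 / (n : ℝ)) • ∑ j, g j xlow)
      = 0) ∧
    ((1 / (n : ℝ)) * ∑ i,
        ‖g i xlow - g i xtil + (1 / (n : ℝ)) • ∑ j, g j xtil - (1 / (n : ℝ)) • ∑ j, g j xlow‖ ^ 2
      ≤ (1 / (n : ℝ)) * ∑ i, ‖g i xlow - g i xtil‖ ^ 2) ∧
    ((∀ i x y, f i y ≥ f i x + ⟪g i x, y - x⟫) →
      (1 / (n : ℝ)) * ∑ i,
        ‖g i xlow - g i xtil + (1 / (n : ℝ)) • ∑ j, g j xtil - (1 / (n : ℝ)) • ∑ j, g j xlow‖ ^ 2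
      ≤ 2 * L * ((1 / (n : ℝ)) * ∑ i, f i xtil - (1 / (n : ℝ)) * ∑ i, f i xlow -
          ⟪(1 / (n : ℝ)) • ∑ j, g j xlow, xtil - xlow⟫)) := by
  have hn' : (n : ℝ) ≠ 0 := Nat.cast_ne_zero.mpr hn.ne'
  set A : Fin n → EuclideanSpace ℝ (Fin d) := fun i => g i xlow - g i xtil with hA
  set m : EuclideanSpace ℝ (Fin d) := (1 / (n : ℝ)) • ∑ j, A j with hm
  have hδ : ∀ i, g i xlow - g i xtil + (1 / (n : ℝ)) • ∑ j, g j xtil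
      - (1 / (n : ℝ)) • ∑ j, g j xlow = A i - m := by
    intro i
    rw [hm, hA]
    simp only [Finset.sum_sub_distrib, smul_sub]
    abel
  have hsumA : ∑ j, A j = (n : ℝ) • m := by
    rw [hm, smul_smul]
    field_simp
    rw [one_smul]
  -- Part 1
  have part1 : (1 / (n : ℝ)) • ∑ i,
      (g i xlow - g i xtil + (1 / (n : ℝ)) • ∑ j, g j xtil - (1 / (n : ℝ)) • ∑ j, g j xlow)
      = 0 := by
    have h0 : ∑ i, (A i - m) = 0 := by
      rw [Finset.sum_sub_distrib, Finset.sum_const, Finset.card_univ, Fintype.card_fin,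
        hsumA, Nat.cast_smul_eq_nsmul ℝ, sub_self]
    simp only [hδ, h0, smul_zero]
  -- Part 2 core
  have hvar : ∑ i, ‖A i - m‖ ^ 2 + (n : ℝ) * ‖m‖ ^ 2 = ∑ i, ‖A i‖ ^ 2 := by
    have expand : ∀ i ∈ Finset.univ, ‖A i - m‖ ^ 2
        = ‖A i‖ ^ 2 - 2 * ⟪A i, m⟫ + ‖m‖ ^ 2 := fun i _ => by
      rw [norm_sub_sq_real]
    rw [Finset.sum_congr rfl expand, Finset.sum_add_distrib, Finset.sum_sub_distrib,
      Finset.sum_const, Finset.card_univ, Fintype.card_fin, ← Finset.mul_sum,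
      ← sum_inner, hsumA, real_inner_smul_left, real_inner_self_eq_norm_sq,
      nsmul_eq_mul]
    ring
  have part2core : ∑ i, ‖A i - m‖ ^ 2 ≤ ∑ i, ‖A i‖ ^ 2 := by
    nlinarith [sq_nonneg ‖m‖, Nat.cast_nonneg (α := ℝ) n, sq_nonneg ‖m‖]
  have hfrac : (0:ℝ) ≤ 1 / (n : ℝ) := by positivity
  have part2 : (1 / (n : ℝ)) * ∑ i,
      ‖g i xlow - g i xtil + (1 / (n : ℝ)) • ∑ j, g j xtil - (1 / (n : ℝ)) • ∑ j, g j xlow‖ ^ 2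
      ≤ (1 / (n : ℝ)) * ∑ i, ‖g i xlow - g i xtil‖ ^ 2 := by
    simp only [hδ]
    exact mul_le_mul_of_nonneg_left part2core hfrac
  refine ⟨part1, part2, fun hconv => ?_⟩
  -- Part 3
  have key : ∀ i, ‖A i‖ ^ 2 ≤ 2 * L * (f i xtil - f i xlow - ⟪g i xlow, xtil - xlow⟫) := by
    intro i
    exact svrg_key L (f i) (g i) (hsmooth i) (hconv i) xlow xtil
  calc (1 / (n : ℝ)) * ∑ i,
      ‖g i xlow - g i xtil + (1 / (n : ℝ)) • ∑ j, g j xtil - (1 / (n : ℝ)) • ∑ j, g j xlow‖ ^ 2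
      ≤ (1 / (n : ℝ)) * ∑ i, ‖A i‖ ^ 2 := part2
    _ ≤ (1 / (n : ℝ)) * ∑ i, 2 * L * (f i xtil - f i xlow - ⟪g i xlow, xtil - xlow⟫) := by
        apply mul_le_mul_of_nonneg_left _ hfrac
        exact Finset.sum_le_sum fun i _ => key i
    _ = 2 * L * ((1 / (n : ℝ)) * ∑ i, f i xtil - (1 / (n : ℝ)) * ∑ i, f i xlow -
          ⟪(1 / (n : ℝ)) • ∑ j, g j xlow, xtil - xlow⟫) := by
        rw [real_inner_smul_left, sum_inner]
        have hms : ∑ i, 2 * L * (f i xtil - f i xlow - ⟪g i xlow, xtil - xlow⟫)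
            = 2 * L * (∑ i, f i xtil - ∑ i, f i xlow - ∑ i, ⟪g i xlow, xtil - xlow⟫) := by
          rw [← Finset.mul_sum, Finset.sum_sub_distrib, Finset.sum_sub_distrib]
        rw [hms]
        ring
end
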